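/- Suppose a_p ≠ a_m. For λ ∈ ℂ \ {0}, the following are equivalent: (a) (K_m J_p − K_p J_m)(K_m' J_p − K_p' J_m) + (K_m K_p' − K_m' K_p)² = 0; (b) (λ − λ⁻¹)² = 4 p² sinh²(2γ); (c) λ = λ(s₁, s₂) for some (s₁, s₂) ∈ {−1, +1}². -/

import Mathlib

noncomputable section
open Complex Matrix

/-- `K_* = p λ − a_* e^{−2γ}`. -/
def Kc (γ p aS : ℝ) (lam : ℂ) : ℂ := (p : ℂ) * lam - (aS : ℂ) * (Real.exp (-(2 * γ)) : ℂ)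

/-- `K_*' = a_* e^{2γ} − p λ⁻¹`. -/
def Kc' (γ p aS : ℝ) (lam : ℂ) : ℂ := (aS : ℂ) * (Real.exp (2 * γ) : ℂ) - (p : ℂ) * lam⁻¹

/-- `J_* = λ − λ⁻¹ + 2 p a_* sinh(2γ)`. -/
def Jc (γ p aS : ℝ) (lam : ℂ) : ℂ :=
  lam - lam⁻¹ + 2 * (p : ℂ) * (aS : ℂ) * (Real.sinh (2 * γ) : ℂ)

/-- `λ(s₁, s₂) = s₁ p sinh(2γ) + s₂ √(1 + p² sinh²(2γ))`. -/
def lamSS (γ p s₁ s₂ : ℝ) : ℝ :=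
  s₁ * p * Real.sinh (2 * γ) + s₂ * Real.sqrt (1 + p ^ 2 * Real.sinh (2 * γ) ^ 2)

/-! `K_*`, `K_*'` and `J_*` are affine in `a_*`, so each 2 × 2 minor in condition (a) is
`a_p − a_m` times a minor of the coefficients, and the whole expression factors as
`−(a_p − a_m)² (1 − p²) ((λ − λ⁻¹)² − 4 p² sinh²(2γ))`.
Then (b) says `λ − λ⁻¹ = ±2 p sinh(2γ)`, i.e. `λ² ∓ 2 p sinh(2γ) λ − 1 = 0`,
whose roots are the `λ(s₁, s₂)`. -/

theorem affine_minors_identity {R : Type*} [CommRing R] (A B C D A' B' x y : R) :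
    ((A - x * B) * (C + y * D) - (A - y * B) * (C + x * D)) *
        ((x * B' - A') * (C + y * D) - (y * B' - A') * (C + x * D)) +
      ((A - x * B) * (y * B' - A') - (x * B' - A') * (A - y * B)) ^ 2 =
    -(y - x) ^ 2 * ((A * D + B * C) * (B' * C + A' * D) - (A * B' - B * A') ^ 2) := by
  ring

theorem affine_minors_bracket_eq {F : Type*} [Field F] (p lam e : F) (hlam : lam ≠ 0)
    (he : e ≠ 0) :
    (p * lam * (p * (e - e⁻¹)) + e⁻¹ * (lam - lam⁻¹)) *
        (e * (lam - lam⁻¹) + p * lam⁻¹ * (p * (e - e⁻¹))) -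
      (p * lam * e - e⁻¹ * (p * lam⁻¹)) ^ 2 =
    (1 - p ^ 2) * ((lam - lam⁻¹) ^ 2 - p ^ 2 * (e - e⁻¹) ^ 2) := by
  field_simp
  ring

theorem condition_i_expr_eq (γ p aP aM : ℝ) {lam : ℂ} (hlam : lam ≠ 0) :
    (Kc γ p aM lam * Jc γ p aP lam - Kc γ p aP lam * Jc γ p aM lam) *
        (Kc' γ p aM lam * Jc γ p aP lam - Kc' γ p aP lam * Jc γ p aM lam) +
      (Kc γ p aM lam * Kc' γ p aP lam - Kc' γ p aM lam * Kc γ p aP lam) ^ 2 =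
    -((aP : ℂ) - aM) ^ 2 * ((1 - (p : ℂ) ^ 2) *
      ((lam - lam⁻¹) ^ 2 - ((4 * p ^ 2 * Real.sinh (2 * γ) ^ 2 : ℝ) : ℂ))) := by
  set E : ℂ := (Real.exp (2 * γ) : ℂ)
  have hE : E ≠ 0 := ofReal_ne_zero.mpr (Real.exp_ne_zero _)
  have hsinh : ((2 * Real.sinh (2 * γ) : ℝ) : ℂ) = E - E⁻¹ := by
    rw [Real.sinh_eq, Real.exp_neg]
    simp only [ofReal_mul, ofReal_div, ofReal_sub, ofReal_inv, ofReal_ofNat]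
    ring
  have hK (a : ℝ) : Kc γ p a lam = p * lam - a * E⁻¹ := by
    rw [Kc, Real.exp_neg, ofReal_inv]
  have hK' (a : ℝ) : Kc' γ p a lam = a * E - p * lam⁻¹ := rfl
  have hJ (a : ℝ) : Jc γ p a lam = (lam - lam⁻¹) + a * (p * (E - E⁻¹)) := by
    rw [Jc, ← hsinh]; push_cast; ring
  have hc : ((4 * p ^ 2 * Real.sinh (2 * γ) ^ 2 : ℝ) : ℂ) = p ^ 2 * (E - E⁻¹) ^ 2 := by
    rw [← hsinh]; push_cast; ring
  rw [hK, hK, hK', hK', hJ, hJ, affine_minors_identity,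
    affine_minors_bracket_eq _ _ _ hlam hE, hc]

theorem sub_inv_eq_iff_quadratic {F : Type*} [Field F] {x : F} (hx : x ≠ 0) (c : F) :
    x - x⁻¹ = c ↔ 1 * (x * x) + -c * x + -1 = 0 := by
  constructor <;> intro h
  · linear_combination x * h + mul_inv_cancel₀ hx
  · apply mul_left_cancel₀ hx
    linear_combination h - mul_inv_cancel₀ hx

theorem sub_inv_eq_two_mul_iff (t : ℝ) {x : ℂ} (hx : x ≠ 0) :
    x - x⁻¹ = 2 * t ↔
      ∃ s : ℝ, (s = 1 ∨ s = -1) ∧ x = ((t + s * √(1 + t ^ 2) : ℝ) : ℂ) := by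
  have hsqrt : ((√(1 + t ^ 2) : ℝ) : ℂ) ^ 2 = 1 + t ^ 2 := by
    exact_mod_cast Real.sq_sqrt (by positivity : (0 : ℝ) ≤ 1 + t ^ 2)
  have hdisc : discrim (1 : ℂ) (-(2 * t)) (-1) =
      ((2 * √(1 + t ^ 2) : ℝ) : ℂ) * ((2 * √(1 + t ^ 2) : ℝ) : ℂ) := by
    rw [discrim]; push_cast; linear_combination (-4) * hsqrt
  rw [sub_inv_eq_iff_quadratic hx, quadratic_eq_zero_iff one_ne_zero hdisc]
  constructor
  · rintro (rfl | rfl)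
    · exact ⟨1, Or.inl rfl, by push_cast; ring⟩
    · exact ⟨-1, Or.inr rfl, by push_cast; ring⟩
  · rintro ⟨s, (rfl | rfl), rfl⟩
    · left; push_cast; ring
    · right; push_cast; ring

theorem sub_inv_sq_eq_iff (t : ℝ) {x : ℂ} (hx : x ≠ 0) :
    (x - x⁻¹) ^ 2 = ((4 * t ^ 2 : ℝ) : ℂ) ↔
      ∃ s₁ s₂ : ℝ, (s₁ = 1 ∨ s₁ = -1) ∧ (s₂ = 1 ∨ s₂ = -1) ∧
        x = ((s₁ * t + s₂ * √(1 + t ^ 2) : ℝ) : ℂ) := by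
  have hsq : ((4 * t ^ 2 : ℝ) : ℂ) = (2 * (t : ℂ)) ^ 2 := by push_cast; ring
  have hneg : -(2 * (t : ℂ)) = 2 * ((-t : ℝ) : ℂ) := by push_cast; ring
  rw [hsq, sq_eq_sq_iff_eq_or_eq_neg, hneg, sub_inv_eq_two_mul_iff t hx,
    sub_inv_eq_two_mul_iff (-t) hx, neg_sq]
  constructor
  · rintro (⟨s, hs, rfl⟩ | ⟨s, hs, rfl⟩)
    · exact ⟨1, s, Or.inl rfl, hs, by rw [one_mul]⟩
    · exact ⟨-1, s, Or.inr rfl, hs, by rw [neg_one_mul]⟩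
  · rintro ⟨s₁, s₂, (rfl | rfl), hs₂, rfl⟩
    · exact Or.inl ⟨s₂, hs₂, by rw [one_mul]⟩
    · exact Or.inr ⟨s₂, hs₂, by rw [neg_one_mul]⟩

theorem condition_i_iff_lamSS_general (γ p : ℝ) (hp : p ∈ Set.Ioo (-1 : ℝ) 1)
    (aP aM : ℝ) (hap : aP ≠ aM) (lam : ℂ) (hlam : lam ≠ 0) :
    ((Kc γ p aM lam * Jc γ p aP lam - Kc γ p aP lam * Jc γ p aM lam) *
        (Kc' γ p aM lam * Jc γ p aP lam - Kc' γ p aP lam * Jc γ p aM lam) +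
        (Kc γ p aM lam * Kc' γ p aP lam - Kc' γ p aM lam * Kc γ p aP lam) ^ 2 = 0 ↔
      (lam - lam⁻¹) ^ 2 = ((4 * p ^ 2 * Real.sinh (2 * γ) ^ 2 : ℝ) : ℂ)) ∧
    ((lam - lam⁻¹) ^ 2 = ((4 * p ^ 2 * Real.sinh (2 * γ) ^ 2 : ℝ) : ℂ) ↔
      ∃ s₁ s₂ : ℝ, (s₁ = 1 ∨ s₁ = -1) ∧ (s₂ = 1 ∨ s₂ = -1) ∧
        lam = ((lamSS γ p s₁ s₂ : ℝ) : ℂ)) := by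
  have ha : -((aP : ℂ) - aM) ^ 2 ≠ 0 :=
    neg_ne_zero.mpr (pow_ne_zero 2 (sub_ne_zero.mpr (by exact_mod_cast hap)))
  have hp2 : 1 - (p : ℂ) ^ 2 ≠ 0 := by
    have : (1 - p ^ 2 : ℝ) ≠ 0 := (by nlinarith [hp.1, hp.2] : (0 : ℝ) < 1 - p ^ 2).ne'
    exact_mod_cast this
  have h4 : 4 * p ^ 2 * Real.sinh (2 * γ) ^ 2 = 4 * (p * Real.sinh (2 * γ)) ^ 2 := by ring
  have hlamSS (s₁ s₂ : ℝ) : lamSS γ p s₁ s₂ =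
      s₁ * (p * Real.sinh (2 * γ)) + s₂ * √(1 + (p * Real.sinh (2 * γ)) ^ 2) := by
    rw [lamSS, mul_pow, mul_assoc]
  refine ⟨?_, ?_⟩
  · rw [condition_i_expr_eq γ p aP aM hlam, mul_eq_zero_iff_left ha, mul_eq_zero_iff_left hp2,
      sub_eq_zero]
  · simp only [hlamSS, h4]
    exact sub_inv_sq_eq_iff _ hlam

/-- For `a_p ≠ a_m`, condition (i) is equivalent to `(λ − λ⁻¹)² = 4 p² sinh²(2γ)`, which is
equivalent to `λ = λ(s₁, s₂)` for some signs. -/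
theorem condition_i_iff_lamSS (γ p : ℝ) (hp : p ∈ Set.Ioo (-1 : ℝ) 1) (q : ℂ)
    (hq : p ^ 2 + ‖q‖ ^ 2 = 1)
    (aP aM : ℝ) (haP : aP ∈ Set.Ioo (-1 : ℝ) 1) (haM : aM ∈ Set.Ioo (-1 : ℝ) 1)
    (bP bM : ℂ) (hbP : aP ^ 2 + ‖bP‖ ^ 2 = 1) (hbM : aM ^ 2 + ‖bM‖ ^ 2 = 1) (hap : aP ≠ aM) (lam : ℂ) (hlam : lam ≠ 0) :
    ((Kc γ p aM lam * Jc γ p aP lam - Kc γ p aP lam * Jc γ p aM lam) *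
        (Kc' γ p aM lam * Jc γ p aP lam - Kc' γ p aP lam * Jc γ p aM lam) +
        (Kc γ p aM lam * Kc' γ p aP lam - Kc' γ p aM lam * Kc γ p aP lam) ^ 2 = 0 ↔
      (lam - lam⁻¹) ^ 2 = ((4 * p ^ 2 * Real.sinh (2 * γ) ^ 2 : ℝ) : ℂ)) ∧
    ((lam - lam⁻¹) ^ 2 = ((4 * p ^ 2 * Real.sinh (2 * γ) ^ 2 : ℝ) : ℂ) ↔
      ∃ s₁ s₂ : ℝ, (s₁ = 1 ∨ s₁ = -1) ∧ (s₂ = 1 ∨ s₂ = -1) ∧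
        lam = ((lamSS γ p s₁ s₂ : ℝ) : ℂ)) :=
  condition_i_iff_lamSS_general γ p hp aP aM hap lam hlam
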